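/- arXiv:2103.15034 — 2 statements merged into one kernel-verified Lean document; each statement's English description precedes it below -/
import Mathlib

section
/- If X is a real-valued random variable that is not almost surely constant, and f and g are strictly increasing real functions such that f(X) and g(X) have finite second moments, then Cov(f(X), g(X)) > 0. -/
/-!
Let `X'` be an independent copy of `X`. Then
`2 Cov(f(X), g(X)) = E[(f(X) - f(X')) (g(X) - g(X'))]`, and the integrand is nonnegative because
`f` and `g` increase together, and strictly positive wherever `X ≠ X'`. If the expectation
vanished, `X = X'` would hold almost surely on the product space, so by Fubini `X` would be
almost surely equal to one of its values.
-/

open MeasureTheory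

lemma StrictMono.sub_mul_sub_pos {α β : Type*} [LinearOrder α] [Ring β] [LinearOrder β]
    [IsStrictOrderedRing β] {f g : α → β} (hf : StrictMono f) (hg : StrictMono g) {a b : α}
    (hab : a ≠ b) : 0 < (f a - f b) * (g a - g b) := by
  rcases hab.lt_or_gt with h | h
  · exact mul_pos_of_neg_of_neg (sub_neg.2 (hf h)) (sub_neg.2 (hg h))
  · exact mul_pos (sub_pos.2 (hf h)) (sub_pos.2 (hg h))

lemma sub_mul_sub_prod_eq {Ω R : Type*} [CommRing R] (F G : Ω → R) (p : Ω × Ω) :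
    (F p.1 - F p.2) * (G p.1 - G p.2)
      = (F * G) p.1 + (F * G) p.2 - F p.1 * G p.2 - G p.1 * F p.2 := by
  simp only [Pi.mul_apply]; ring

namespace MeasureTheory

variable {Ω : Type*} [MeasurableSpace Ω] {μ : Measure Ω}

lemma exists_ae_eq_const_of_ae_prod_eq {α : Type*} [SFinite μ] [NeZero μ] {X : Ω → α}
    (h : ∀ᵐ p ∂μ.prod μ, X p.1 = X p.2) : ∃ c, X =ᵐ[μ] fun _ => c := by
  obtain ⟨x, hx⟩ := (Measure.ae_ae_of_ae_prod h).exists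
  exact ⟨X x, hx.mono fun _ hy => hy.symm⟩

variable {F G : Ω → ℝ}

lemma integrable_prod_sub_mul_sub [IsFiniteMeasure μ] (hF : Integrable F μ) (hG : Integrable G μ)
    (hFG : Integrable (F * G) μ) :
    Integrable (fun p => (F p.1 - F p.2) * (G p.1 - G p.2)) (μ.prod μ) := by
  simp_rw [sub_mul_sub_prod_eq F G]
  exact (((hFG.comp_fst μ).add (hFG.comp_snd μ)).sub (hF.mul_prod hG)).sub (hG.mul_prod hF)

lemma integral_prod_sub_mul_sub [IsProbabilityMeasure μ] (hF : Integrable F μ) (hG : Integrable G μ)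
    (hFG : Integrable (F * G) μ) :
    ∫ p, (F p.1 - F p.2) * (G p.1 - G p.2) ∂μ.prod μ
      = 2 * (∫ ω, F ω * G ω ∂μ - (∫ ω, F ω ∂μ) * ∫ ω, G ω ∂μ) := by
  have h1 := hFG.comp_fst μ
  have h2 := hFG.comp_snd μ
  have h3 := hF.mul_prod hG
  have h4 := hG.mul_prod hF
  simp_rw [sub_mul_sub_prod_eq F G]
  rw [integral_sub (by exact (h1.add h2).sub h3) h4, integral_sub (by exact h1.add h2) h3,
    integral_add h1 h2, integral_fun_fst, integral_fun_snd, integral_prod_mul, integral_prod_mul]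
  simp only [probReal_univ, one_smul, Pi.mul_apply]
  ring

end MeasureTheory

theorem cov_of_strictMono_pos_general
    {Ω : Type*} [MeasurableSpace Ω] {μ : Measure Ω} [IsProbabilityMeasure μ]
    (X : Ω → ℝ)
    (hnc : ¬ ∃ c : ℝ, X =ᵐ[μ] fun _ => c)
    (f g : ℝ → ℝ) (hf : StrictMono f) (hg : StrictMono g)
    (hfX : MemLp (fun ω => f (X ω)) 2 μ) (hgX : MemLp (fun ω => g (X ω)) 2 μ) :
    0 < (∫ ω, f (X ω) * g (X ω) ∂μ) - (∫ ω, f (X ω) ∂μ) * (∫ ω, g (X ω) ∂μ) := by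
  have hF := hfX.integrable one_le_two
  have hG := hgX.integrable one_le_two
  have hFG := hfX.integrable_mul hgX
  have hH_nonneg : ∀ p : Ω × Ω, 0 ≤ (f (X p.1) - f (X p.2)) * (g (X p.1) - g (X p.2)) :=
    fun p => (hf.monotone.monovary hg.monotone).sub_mul_sub_nonneg _ _
  have hH_pos : 0 < ∫ p, (f (X p.1) - f (X p.2)) * (g (X p.1) - g (X p.2)) ∂μ.prod μ := by
    refine (integral_nonneg hH_nonneg).lt_of_ne fun h0 => hnc (exists_ae_eq_const_of_ae_prod_eq ?_)
    filter_upwards [(integral_eq_zero_iff_of_nonneg hH_nonneg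
      (integrable_prod_sub_mul_sub hF hG hFG)).1 h0.symm] with p hp
    by_contra hne
    exact (hf.sub_mul_sub_pos hg hne).ne' hp
  rw [integral_prod_sub_mul_sub hF hG hFG] at hH_pos
  linarith

/-- If `X` is a real-valued random variable that is not almost surely constant, and `f`, `g`
are strictly increasing with `f(X), g(X) ∈ L²`, then `Cov(f(X), g(X)) > 0`. -/
theorem cov_of_strictMono_pos
    {Ω : Type*} [MeasurableSpace Ω] {μ : Measure Ω} [IsProbabilityMeasure μ]
    (X : Ω → ℝ) (hX : Measurable X)
    (hnc : ¬ ∃ c : ℝ, X =ᵐ[μ] fun _ => c)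
    (f g : ℝ → ℝ) (hf : StrictMono f) (hg : StrictMono g)
    (hfX : MemLp (fun ω => f (X ω)) 2 μ) (hgX : MemLp (fun ω => g (X ω)) 2 μ) :
    0 < (∫ ω, f (X ω) * g (X ω) ∂μ) - (∫ ω, f (X ω) ∂μ) * (∫ ω, g (X ω) ∂μ) :=
  cov_of_strictMono_pos_general X hnc f g hf hg hfX hgX
end

section
/- If f and g are strictly increasing functions, X and Y are i.i.d., and E[(f(X) - f(Y))(g(X) - g(Y))] = 0, then X = Y almost surely, which (since X, Y are independent) implies X is almost surely constant. -/
/-!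
By strict monotonicity the integrand `(f X - f Y) (g X - g Y)` is nonnegative and vanishes
exactly where `X = Y`, so a zero expectation forces `X = Y` almost surely. Then `X` is independent
of itself, so every event `{X ∈ U}` has probability `0` or `1`; since the Borel sets of `ℝ` are
countably separated, this makes `X` almost surely constant.
-/

open MeasureTheory ProbabilityTheory Filter

theorem StrictMono.mul_sub_pos {α β : Type*} [LinearOrder α] [Ring β] [PartialOrder β]
    [IsStrictOrderedRing β] {f g : α → β} (hf : StrictMono f) (hg : StrictMono g) {a b : α}
    (hab : a ≠ b) : 0 < (f a - f b) * (g a - g b) := by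
  rcases hab.lt_or_gt with h | h
  · exact mul_pos_of_neg_of_neg (sub_neg.mpr (hf h)) (sub_neg.mpr (hg h))
  · exact mul_pos (sub_pos.mpr (hf h)) (sub_pos.mpr (hg h))

section

variable {Ω α : Type*} [MeasurableSpace Ω] {μ : Measure Ω}

theorem ae_eq_of_integral_mul_sub_eq_zero [LinearOrder α] {X Y : Ω → α} {f g : α → ℝ}
    (hf : StrictMono f) (hg : StrictMono g)
    (hint : Integrable (fun ω => (f (X ω) - f (Y ω)) * (g (X ω) - g (Y ω))) μ)
    (hzero : ∫ ω, (f (X ω) - f (Y ω)) * (g (X ω) - g (Y ω)) ∂μ = 0) :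
    X =ᵐ[μ] Y := by
  have hnonneg : 0 ≤ᵐ[μ] fun ω => (f (X ω) - f (Y ω)) * (g (X ω) - g (Y ω)) :=
    ae_of_all μ fun ω => (eq_or_ne (X ω) (Y ω)).elim (fun h => by simp [h])
      fun h => (hf.mul_sub_pos hg h).le
  filter_upwards [(integral_eq_zero_iff_of_nonneg_ae hnonneg hint).mp hzero] with ω hω
  by_contra h
  exact (hf.mul_sub_pos hg h).ne' hω

theorem exists_ae_eq_const_of_indepFun_self [IsProbabilityMeasure μ] [MeasurableSpace α]
    [MeasurableSpace.CountablySeparated α] [Nonempty α] {X : Ω → α} (hindep : IndepFun X X μ)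
    (hX : AEMeasurable X μ) : ∃ c, X =ᵐ[μ] fun _ => c := by
  refine exists_eventuallyEq_const_of_forall_separating MeasurableSet fun U hU => ?_
  rcases measure_eq_zero_or_one_of_indep_self hindep ⟨U, hU, rfl⟩ with h0 | h1
  · exact Or.inr (measure_eq_zero_iff_ae_notMem.mp h0)
  · exact Or.inl ((mem_ae_iff_prob_eq_one₀ (hX.nullMeasurableSet_preimage hU)).mpr h1)

end

theorem eq_and_const_of_expectation_eq_zero_general
    {Ω : Type*} [MeasurableSpace Ω] {μ : Measure Ω} [IsProbabilityMeasure μ]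
    (X Y : Ω → ℝ)
    (hindep : IndepFun X Y μ) (hid : IdentDistrib X Y μ μ)
    (f g : ℝ → ℝ) (hf : StrictMono f) (hg : StrictMono g)
    (hfX : MemLp (fun ω => f (X ω)) 2 μ) (hgX : MemLp (fun ω => g (X ω)) 2 μ)
    (hzero : ∫ ω, (f (X ω) - f (Y ω)) * (g (X ω) - g (Y ω)) ∂μ = 0) :
    X =ᵐ[μ] Y ∧ ∃ c : ℝ, X =ᵐ[μ] fun _ => c := by
  have hfY : MemLp (fun ω => f (Y ω)) 2 μ := (hid.comp hf.monotone.measurable).memLp_iff.mp hfX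
  have hgY : MemLp (fun ω => g (Y ω)) 2 μ := (hid.comp hg.monotone.measurable).memLp_iff.mp hgX
  have hXY : X =ᵐ[μ] Y :=
    ae_eq_of_integral_mul_sub_eq_zero hf hg ((hfX.sub hfY).integrable_mul (hgX.sub hgY)) hzero
  exact ⟨hXY, exists_ae_eq_const_of_indepFun_self (hindep.congr (ae_eq_refl X) hXY.symm)
    hid.aemeasurable_fst⟩

/-- If `f`, `g` are strictly increasing, `X` and `Y` are i.i.d., and
`E[(f(X) - f(Y)) (g(X) - g(Y))] = 0`, then `X = Y` a.s., which (by independence) implies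
`X` is almost surely constant. -/
theorem eq_and_const_of_expectation_eq_zero
    {Ω : Type*} [MeasurableSpace Ω] {μ : Measure Ω} [IsProbabilityMeasure μ]
    (X Y : Ω → ℝ) (hX : Measurable X) (hY : Measurable Y)
    (hindep : IndepFun X Y μ) (hid : IdentDistrib X Y μ μ)
    (f g : ℝ → ℝ) (hf : StrictMono f) (hg : StrictMono g)
    (hfX : MemLp (fun ω => f (X ω)) 2 μ) (hgX : MemLp (fun ω => g (X ω)) 2 μ)
    (hzero : ∫ ω, (f (X ω) - f (Y ω)) * (g (X ω) - g (Y ω)) ∂μ = 0) :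
    X =ᵐ[μ] Y ∧ ∃ c : ℝ, X =ᵐ[μ] fun _ => c :=
  eq_and_const_of_expectation_eq_zero_general X Y hindep hid f g hf hg hfX hgX hzero
end
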